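/- Given an order-n Büchi PDS BP = (P, D, Σ, F) and the flagged PDS BP′, there exists a run ⟨(p, 0), [^n a]^n⟩ ↪* ⟨(p, 1), w′⟩ in BP′ with w′ an n-store satisfying top_1(w′) = a if and only if ⟨p, [^n a]^n⟩ ∈ Pre*((F × C^Σ_n) ∩ Pre^+({p} × L(B^a_n))). -/

import Mathlib

/-!
The flag of `BP′` is switched on exactly when a transition leaves an accepting state, and it is
never switched off. Forgetting the flag turns a `BP′` run into a `BP` run, and the step at which
the flag flips splits a run from flag `0` to flag `1` into a `BP` run to an accepting
configuration followed by at least one further step. Conversely, such a `BP` run lifts to `BP′`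
by keeping flag `0` up to the first accepting state it leaves and flag `1` afterwards.
-/

namespace HOPDS

/-- `St α k` is the type of order-`(k+1)` stores over the alphabet `α`
(so an `n`-store, for `n ≥ 1`, is a term of type `St α (n-1)`).
An order-1 store is a finite word; an order-`(k+2)` store is a nonempty
list (encoded as head plus tail of the list) of order-`(k+1)` stores. -/
def St (α : Type) : ℕ → Type
  | 0 => List α
  | k + 1 => St α k × List (St α k)

/-- the `top₁` symbol of a store (`none` on an empty order-1 store) -/
def St.top1 {α : Type} : (k : ℕ) → St α k → Option α
  | 0, w => List.head? w
  | k + 1, s => St.top1 k s.1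

/-- Stack operations: `pushw w` is `push_w` (with `pop₁ = push_ε`);
`push l` / `pop l` are `push_l` / `pop_l`. -/
inductive Op (α : Type) where
  | pushw : List α → Op α
  | push : ℕ → Op α
  | pop : ℕ → Op α

/-- `Op.Valid n o` says that `o` belongs to `O_n`. -/
def Op.Valid {α : Type} (n : ℕ) : Op α → Prop
  | .pushw _ => True
  | .push l => 2 ≤ l ∧ l ≤ n
  | .pop l => 2 ≤ l ∧ l ≤ n

/-- partial application of a stack operation to an order-`(k+1)` store -/
def Op.apply {α : Type} : (k : ℕ) → Op α → St α k → Option (St α k)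
  | 0, .pushw w, s =>
      match (s : List α) with
      | [] => none
      | _ :: t => some ((w ++ t : List α))
  | 0, .push _, _ => none
  | 0, .pop _, _ => none
  | k + 1, .pushw w, s =>
      (Op.apply k (.pushw w) s.1).map fun t' => ((t', s.2) : St α (k+1))
  | k + 1, .push l, s =>
      if l = k + 2 then some ((s.1, s.1 :: s.2) : St α (k+1))
      else (Op.apply k (.push l) s.1).map fun t' => ((t', s.2) : St α (k+1))
  | k + 1, .pop l, s =>
      if l = k + 2 then
        match s.2 with
        | [] => none
        | r :: rs => some ((r, rs) : St α (k+1))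
      else (Op.apply k (.pop l) s.1).map fun t' => ((t', s.2) : St α (k+1))

/-- configurations of an order-`(k+1)` pushdown system -/
abbrev PConf (P α : Type) (k : ℕ) := P × St α k

/-- one transition `⟨p,γ⟩ ↪ ⟨p',γ'⟩` of an order-`(k+1)` PDS with commands `D` -/
def PStep {P α : Type} {k : ℕ} (D : Set (P × α × Op α × P)) (c c' : PConf P α k) : Prop :=
  ∃ a o, (c.1, a, o, c'.1) ∈ D ∧ St.top1 k c.2 = some a ∧ Op.apply k o c.2 = some c'.2

def PPreStar {P α : Type} {k : ℕ} (D : Set (P × α × Op α × P)) (C : Set (PConf P α k)) :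
    Set (PConf P α k) :=
  {c | ∃ c' ∈ C, Relation.ReflTransGen (PStep D) c c'}

def PPrePlus {P α : Type} {k : ℕ} (D : Set (P × α × Op α × P)) (C : Set (PConf P α k)) :
    Set (PConf P α k) :=
  {c | ∃ c' ∈ C, Relation.TransGen (PStep D) c c'}

/-- configurations of an order-`(k+1)` alternating PDS; `none` is the undefined store `∇` -/
abbrev AConf (P α : Type) (k : ℕ) := P × Option (St α k)

/-- `⟨p,γ⟩ ↪ C` for an APDS with commands `D ⊆ P × Σ × 2^(O_n × P)` -/
def AStep {P α : Type} {k : ℕ} (D : Set (P × α × Set (Op α × P)))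
    (c : AConf P α k) (C : Set (AConf P α k)) : Prop :=
  ∃ p γ a OP, c = (p, some γ) ∧ (p, a, OP) ∈ D ∧ St.top1 k γ = some a ∧
    C = {c' | ∃ o p' δ, (o, p') ∈ OP ∧ Op.apply k o γ = some δ ∧ c' = (p', some δ)}
      ∪ {c' | (∃ o p', (o, p') ∈ OP ∧ Op.apply k o γ = none) ∧ c' = (p, none)}

/-- extension of `↪` to sets of configurations -/
def ASetStep {P α : Type} {k : ℕ} (D : Set (P × α × Set (Op α × P)))
    (X Y : Set (AConf P α k)) : Prop :=
  ∃ c C C', AStep D c C ∧ c ∉ C' ∧ X = insert c C' ∧ Y = C' ∪ C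

/-- `Pre*(C_Init)` for an APDS: the configurations `c` with `{c} ↪* C ⊆ C_Init` -/
def APreStar {P α : Type} {k : ℕ} (D : Set (P × α × Set (Op α × P)))
    (CI : Set (AConf P α k)) : Set (AConf P α k) :=
  {c | ∃ C, Relation.ReflTransGen (ASetStep D) {c} C ∧ C ⊆ CI}

/-- one alternating step: choose one transition from every state of `S` and union the targets -/
def setStep {L : Type} (tr : ℕ → L → Set ℕ → Prop) (l : L) (S S' : Set ℕ) : Prop :=
  ∃ f : ℕ → Set ℕ, (∀ q ∈ S, tr q l (f q)) ∧ S' = ⋃ q ∈ S, f q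

/-- alternating run over a word of labels -/
inductive listRun {L : Type} (tr : ℕ → L → Set ℕ → Prop) : List L → Set ℕ → Set ℕ → Prop
  | nil (S : Set ℕ) : listRun tr [] S S
  | cons {l : L} {ls : List L} {S S1 S2 : Set ℕ} :
      setStep tr l S S1 → listRun tr ls S1 S2 → listRun tr (l :: ls) S S2

/-- Alternating order-`(k+1)` store automata: states drawn from `ℕ`, a finite list of
transitions labelled (at higher orders) by order-`k` store automata, an initial state,
and a finite list of final states. -/
def SA (α : Type) : ℕ → Type
  | 0 => List (ℕ × α × List ℕ) × ℕ × List ℕ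
  | k + 1 => List (ℕ × SA α k × List ℕ) × ℕ × List ℕ

/-- the initial state of a store automaton -/
def SA.init {α : Type} : (k : ℕ) → SA α k → ℕ
  | 0, A => A.2.1
  | _ + 1, A => A.2.1

/-- acceptance of an order-`(k+1)` store from state `q`: an alternating run over the
word of (sub)stores ending in a set of final states, where at each step every label
must accept the store being read -/
def SA.accFrom {α : Type} : (k : ℕ) → SA α k → ℕ → St α k → Prop
  | 0, A, q, w =>
      ∃ S, listRun (fun q' a T => ∃ L, (q', a, L) ∈ A.1 ∧ T = {x | x ∈ L})
          (w : List α) {q} S ∧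
        S ⊆ {x | x ∈ A.2.2}
  | k + 1, A, q, s =>
      ∃ S,
        listRun
          (fun q' γ T => ∃ B L, (q', B, L) ∈ A.1 ∧ SA.accFrom k B (SA.init k B) γ ∧
            T = {x | x ∈ L})
          (s.1 :: s.2) {q} S ∧
        S ⊆ {x | x ∈ A.2.2}

/-- acceptance from the initial state -/
def SA.acc {α : Type} {k : ℕ} (A : SA α k) (s : St α k) : Prop :=
  SA.accFrom k A (SA.init k A) s

/-- size of a store automaton (transitions counted recursively) -/
def SA.size {α : Type} : (k : ℕ) → SA α k → ℕ
  | 0, A => A.1.length + A.2.2.length + 1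
  | k + 1, A =>
      (A.1.map fun t => SA.size k t.2.1 + t.2.2.length + 1).sum + A.2.2.length + 1

/-- An order-`(k+1)`-store multi-automaton: a shared store automaton together with
one initial state per control state, and possible `∇`-transitions (`nabla p` holds iff
there is a transition `q^p —∇→ {q^ε_f}`). -/
structure MSA (α P : Type) (k : ℕ) where
  core : SA α k
  inits : P → ℕ
  nabla : Set P

/-- the set of configurations accepted by a multi-automaton -/
def MSA.Lang {α P : Type} {k : ℕ} (M : MSA α P k) : Set (AConf P α k) :=
  {c | (∃ s, c.2 = some s ∧ SA.accFrom k M.core (M.inits c.1) s) ∨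
       (c.2 = none ∧ c.1 ∈ M.nabla)}

def MSA.size {α P : Type} {k : ℕ} (M : MSA α P k) : ℕ := SA.size k M.core

/-- regular sets of configurations: those recognised by a store multi-automaton -/
def Regular {α P : Type} {k : ℕ} (C : Set (AConf P α k)) : Prop :=
  ∃ M : MSA α P k, M.Lang = C

/-- tower of exponentials: `tower n x = exp_n(x)` -/
def tower : ℕ → ℕ → ℕ
  | 0, x => x
  | n + 1, x => 2 ^ tower n x

/-- Büchi acceptance: an infinite run visiting accepting control states infinitely often -/
def BuchiAcc {P α : Type} {k : ℕ} (D : Set (P × α × Op α × P)) (F : Set P)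
    (c : PConf P α k) : Prop :=
  ∃ r : ℕ → PConf P α k,
    r 0 = c ∧ (∀ i, PStep D (r i) (r (i + 1))) ∧ ∀ i, ∃ j, i ≤ j ∧ (r j).1 ∈ F

/-- the store `[^n a]^n` (each level a singleton) -/
def unitSt {α : Type} (a : α) : (k : ℕ) → St α k
  | 0 => [a]
  | k + 1 => ((unitSt a k, []) : St α (k+1))

/-- Eloise's attractor for a reachability game with step relation `step`,
Eloise-owned configurations `E` and target set `R`:  `Attr_E(R) = ⋃ᵢ Attrⁱ_E(R)`. -/
def AttrE {C : Type} (step : C → C → Prop) (E : Set C) (R : Set C) : Set C :=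
  ⋃ i,
    (fun X => X ∪ {c | c ∈ E ∧ ∃ c', step c c' ∧ c' ∈ X}
                ∪ {c | c ∉ E ∧ ∀ c', step c c' → c' ∈ X})^[i] R

end HOPDS

namespace HOPDS

/-- the flagged PDS `BP' = (P × {0,1}, D', Σ)` obtained from a Büchi PDS `(P, D, Σ, F)`
(`false` plays the role of flag `0`, `true` of flag `1`) -/
def flagged {P α : Type} (D : Set (P × α × Op α × P)) (F : Set P) :
    Set ((P × Bool) × α × Op α × (P × Bool)) :=
  {x | ∃ p a o p', (p, a, o, p') ∈ D ∧
        ((p ∉ F ∧ x = ((p, false), a, o, (p', false))) ∨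
         (p ∈ F ∧ x = ((p, false), a, o, (p', true))) ∨
         x = ((p, true), a, o, (p', true)))}

section Flagged

variable {P α : Type} {k : ℕ} {D : Set (P × α × Op α × P)} {F : Set P}

theorem mem_flagged_iff {p p' : P} {b b' : Bool} {a : α} {o : Op α} :
    ((p, b), a, o, (p', b')) ∈ flagged D F ↔
      (p, a, o, p') ∈ D ∧ (b' = true ↔ b = true ∨ p ∈ F) := by
  constructor
  · rintro ⟨q, a', o', q', hD, ⟨hq, he⟩ | ⟨hq, he⟩ | he⟩ <;>
      simp only [Prod.mk.injEq] at he <;> obtain ⟨⟨rfl, rfl⟩, rfl, rfl, rfl, rfl⟩ := he <;>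
      simp [*]
  · rintro ⟨hD, hb'⟩
    refine ⟨p, a, o, p', hD, ?_⟩
    cases b <;> cases b' <;> by_cases hp : p ∈ F <;> simp_all

theorem pStep_flagged_iff {p p' : P} {b b' : Bool} {γ γ' : St α k} :
    PStep (flagged D F) ((p, b), γ) ((p', b'), γ') ↔
      PStep D (p, γ) (p', γ') ∧ (b' = true ↔ b = true ∨ p ∈ F) := by
  simp only [PStep, mem_flagged_iff]
  constructor
  · rintro ⟨a, o, ⟨hD, hb⟩, htop, happ⟩
    exact ⟨⟨a, o, hD, htop, happ⟩, hb⟩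
  · rintro ⟨⟨a, o, hD, htop, happ⟩, hb⟩
    exact ⟨a, o, ⟨hD, hb⟩, htop, happ⟩

theorem reflTransGen_of_flagged {c c' : PConf (P × Bool) α k}
    (h : Relation.ReflTransGen (PStep (flagged D F)) c c') :
    Relation.ReflTransGen (PStep D) (c.1.1, c.2) (c'.1.1, c'.2) :=
  h.lift (fun c => (c.1.1, c.2)) fun _ _ hs => (pStep_flagged_iff.mp hs).1

theorem reflTransGen_flagged_true {c c' : PConf P α k}
    (h : Relation.ReflTransGen (PStep D) c c') :
    Relation.ReflTransGen (PStep (flagged D F)) ((c.1, true), c.2) ((c'.1, true), c'.2) :=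
  h.lift (fun c : PConf P α k => ((c.1, true), c.2)) fun _ _ hs =>
    pStep_flagged_iff.mpr ⟨hs, by simp⟩

theorem exists_accepting_of_reflTransGen_flagged {c : PConf (P × Bool) α k} {p' : P}
    {γ' : St α k}
    (h : Relation.ReflTransGen (PStep (flagged D F)) c ((p', true), γ'))
    (hc : c.1.2 = false) :
    ∃ m : PConf P α k, m.1 ∈ F ∧ Relation.ReflTransGen (PStep D) (c.1.1, c.2) m ∧
      Relation.TransGen (PStep D) m (p', γ') := by
  revert hc
  induction h using Relation.ReflTransGen.head_induction_on with
  | refl => simp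
  | @head c c'' hstep hrest ih =>
    intro hc
    obtain ⟨⟨q, b⟩, γ⟩ := c
    obtain ⟨⟨q'', b''⟩, γ''⟩ := c''
    obtain rfl : b = false := hc
    obtain ⟨hD, hflag⟩ := pStep_flagged_iff.mp hstep
    cases b''
    · obtain ⟨m, hmF, hpre, hpost⟩ := ih rfl
      exact ⟨m, hmF, hpre.head hD, hpost⟩
    · have hq : q ∈ F := by simpa using hflag
      exact ⟨(q, γ), hq, .refl, .head' hD (reflTransGen_of_flagged hrest)⟩

theorem reflTransGen_flagged_of_accepting {c m : PConf P α k} {p' : P} {γ' : St α k}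
    (hpre : Relation.ReflTransGen (PStep D) c m) (hmF : m.1 ∈ F)
    (hpost : Relation.TransGen (PStep D) m (p', γ')) :
    Relation.ReflTransGen (PStep (flagged D F)) ((c.1, false), c.2) ((p', true), γ') := by
  induction hpre using Relation.ReflTransGen.head_induction_on with
  | refl =>
    obtain ⟨c, hstep, hrest⟩ := Relation.TransGen.head'_iff.mp hpost
    exact .head (pStep_flagged_iff.mpr ⟨hstep, by simpa using hmF⟩)
      (reflTransGen_flagged_true hrest)
  | @head c c' hstep hrest ih =>
    by_cases hc : c.1 ∈ F
    · exact .head (pStep_flagged_iff.mpr ⟨hstep, by simpa using hc⟩)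
        (reflTransGen_flagged_true (hrest.trans hpost.to_reflTransGen))
    · exact .head (pStep_flagged_iff.mpr ⟨hstep, by simpa using hc⟩) ih

theorem reflTransGen_flagged_iff {p p' : P} {γ γ' : St α k} :
    Relation.ReflTransGen (PStep (flagged D F)) ((p, false), γ) ((p', true), γ') ↔
      ∃ m : PConf P α k, m.1 ∈ F ∧ Relation.ReflTransGen (PStep D) (p, γ) m ∧
        Relation.TransGen (PStep D) m (p', γ') :=
  ⟨fun h => exists_accepting_of_reflTransGen_flagged h rfl,
    fun ⟨_, hmF, hpre, hpost⟩ =>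
      reflTransGen_flagged_of_accepting (c := (p, γ)) hpre hmF hpost⟩

end Flagged

theorem flagged_runs_characterise_buchi_condition_general
    (k : ℕ) (α P : Type)
    (D : Set (P × α × Op α × P))
    (F : Set P) (p : P) (a : α) :
    (∃ w' : St α k,
        Relation.ReflTransGen (PStep (flagged D F))
          ((p, false), unitSt a k) ((p, true), w') ∧
        St.top1 k w' = some a) ↔
      (p, unitSt a k) ∈
        PPreStar D
          ({c : PConf P α k | c.1 ∈ F} ∩
            PPrePlus D {c : PConf P α k | c.1 = p ∧ St.top1 k c.2 = some a}) := by
  simp only [reflTransGen_flagged_iff]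
  constructor
  · rintro ⟨w', ⟨m, hmF, hpre, hpost⟩, htop⟩
    exact ⟨m, ⟨hmF, (p, w'), ⟨rfl, htop⟩, hpost⟩, hpre⟩
  · rintro ⟨m, ⟨hmF, ⟨_, w'⟩, ⟨rfl, htop⟩, hpost⟩, hpre⟩
    exact ⟨w', ⟨m, hmF, hpre, hpost⟩, htop⟩

/-- Given an order-`n` Büchi PDS `BP = (P, D, Σ, F)` (here `n = k + 1`)
and the flagged PDS `BP'`, there is a run `⟨(p,0), [^n a]^n⟩ ↪* ⟨(p,1), w'⟩` in `BP'` with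
`w'` an `n`-store satisfying `top₁(w') = a`, if and only if
`⟨p, [^n a]^n⟩ ∈ Pre*((F × C^Σ_n) ∩ Pre⁺({p} × L(B^a_n)))`. -/
theorem flagged_runs_characterise_buchi_condition
    (k : ℕ) (α P : Type) [Finite α] [Finite P]
    (D : Set (P × α × Op α × P)) (hDfin : D.Finite)
    (hvalid : ∀ x ∈ D, Op.Valid (k + 1) x.2.2.1)
    (F : Set P) (p : P) (a : α) :
    (∃ w' : St α k,
        Relation.ReflTransGen (PStep (flagged D F))
          ((p, false), unitSt a k) ((p, true), w') ∧
        St.top1 k w' = some a) ↔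
      (p, unitSt a k) ∈
        PPreStar D
          ({c : PConf P α k | c.1 ∈ F} ∩
            PPrePlus D {c : PConf P α k | c.1 = p ∧ St.top1 k c.2 = some a}) :=
  flagged_runs_characterise_buchi_condition_general k α P D F p a

end HOPDS
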